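/- Let C be a pointed category with finite sums and n ≥ 1. There is a well-defined preadditive category T_n ℤ̄[C] with the same objects as C, morphism groups Hom(X,Y) = T_n U_X^C(Y) (the n-th Taylorization of the reduced standard projective functor U_X^C evaluated at Y), and bilinear composition satisfying t_n(g) ∘ t_n(f) = t_n(g ∘ f) for composable morphisms f, g of C. -/

import Mathlib

open CategoryTheory CategoryTheory.Limits

universe w v u

variable {C : Type u} [Category.{v} C] [HasZeroMorphisms C] [HasFiniteCoproducts C]

/-- The retraction `r_k : X₁ ∨ ⋯ ∨ X_n → X₁ ∨ ⋯ ∨ X̂_k ∨ ⋯ ∨ X_n` killing the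
`k`-th summand. -/
noncomputable def rhat {ι : Type} [Fintype ι] [DecidableEq ι] (X : ι → C) (k : ι) :
    (∐ X) ⟶ ∐ (fun i : {i : ι // i ≠ k} => X i.1) :=
  Sigma.desc (fun i =>
    if h : i = k then 0 else Sigma.ι (fun i : {i : ι // i ≠ k} => X i.1) ⟨i, h⟩)

/-- The submodule `ℤ·[0] ⊆ ℤ[Hom_C(X,Y)]` spanned by the zero morphism. -/
noncomputable def zspan (X Y : C) : Submodule ℤ ((X ⟶ Y) →₀ ℤ) :=
  Submodule.span ℤ {Finsupp.single (0 : X ⟶ Y) (1 : ℤ)}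

/-- The reduced standard projective functor
`U_X^C(Y) = ℤ[Hom_C(X,Y)]/ℤ·[0]` (Definition `UXC`). -/
noncomputable abbrev UX (X Y : C) :=
  ((X ⟶ Y) →₀ ℤ) ⧸ zspan X Y

/-- The functorial action of `U_X^C` on a morphism `h : Y ⟶ Z`. -/
noncomputable def UXmap (X : C) {Y Z : C} (h : Y ⟶ Z) :
    UX X Y →ₗ[ℤ] UX X Z :=
  Submodule.mapQ (zspan X Y) (zspan X Z)
    (Finsupp.lmapDomain ℤ ℤ (fun f : X ⟶ Y => f ≫ h))
    (by
      rw [zspan, Submodule.span_le]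
      rintro x hx
      simp only [Set.mem_singleton_iff] at hx
      subst hx
      simp only [SetLike.mem_coe, Submodule.mem_comap, Finsupp.lmapDomain_apply,
        Finsupp.mapDomain_single, Limits.zero_comp]
      exact Submodule.subset_span rfl)

/-- The image of the `(n+1)`-st cross-effect of `U_X^C` at `(Y,…,Y)` under the
fold map: the subgroup by which one divides to form `T_n U_X^C (Y)`. -/
noncomputable def TnIm (n : ℕ) (X Y : C) : Submodule ℤ (UX X Y) :=
  Submodule.map (UXmap X (Sigma.desc fun _ : Fin (n + 1) => 𝟙 Y))
    (⨅ k : Fin (n + 1),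
      LinearMap.ker (UXmap X (rhat (fun _ : Fin (n + 1) => Y) k)))

/-- The `n`-th Taylorization `T_n U_X^C (Y)` of the reduced standard projective
functor, evaluated at `Y`. -/
noncomputable abbrev TnU (n : ℕ) (X Y : C) :=
  UX X Y ⧸ TnIm n X Y

/-- The universal polynomial map of degree `≤ n`,
`t_n : Hom_C(X,Y) → T_n U_X^C (Y)`. -/
noncomputable def tn (n : ℕ) {X Y : C} (f : X ⟶ Y) : TnU n X Y :=
  Submodule.Quotient.mk (Submodule.Quotient.mk (Finsupp.single f (1 : ℤ)))

/-!
Composition `[g] ∘ [f] = [f ≫ g]` is bilinear on `ℤ[Hom]`, so the only issue is that it descends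
to the Taylorizations `T_n U_X^C(Y) = U_X^C(Y) / TnIm`. In each variable it is induced by a natural
map: post-composition with `g` is the functoriality `U_X^C(g)`, and pre-composition with `f` is a
natural transformation `U_Y^C → U_X^C`. Both preserve the image of the cross-effect, because
`U_X^C(g)` commutes with the fold map and the retractions `r_k` after replacing `g` by `∐ g`, and
a natural transformation commutes with every `U(h)`. Unit and associativity laws then only have to
be checked on the generators `t_n(f)`, where they are those of `C`.
-/

section UX

omit [HasFiniteCoproducts C]

variable {M : Type*} [AddCommGroup M]

lemma UX_ext {X Y : C} {φ ψ : UX X Y →ₗ[ℤ] M}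
    (h : ∀ f : X ⟶ Y,
      φ (Submodule.Quotient.mk (Finsupp.single f (1 : ℤ))) =
        ψ (Submodule.Quotient.mk (Finsupp.single f (1 : ℤ)))) : φ = ψ :=
  Submodule.linearMap_qext _ (Finsupp.lhom_ext' fun f => LinearMap.ext_ring (h f))

lemma UX_mk_single_zero (X Y : C) :
    (Submodule.Quotient.mk (Finsupp.single (0 : X ⟶ Y) 1) : UX X Y) = 0 :=
  (Submodule.Quotient.mk_eq_zero _).2 (Submodule.subset_span rfl)

@[simp] lemma UXmap_mk_single (X : C) {Y Z : C} (h : Y ⟶ Z) (f : X ⟶ Y) :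
    UXmap X h (Submodule.Quotient.mk (Finsupp.single f (1 : ℤ))) =
      Submodule.Quotient.mk (Finsupp.single (f ≫ h) 1) := by
  simp [UXmap, Submodule.mapQ_apply]

lemma UXmap_comp_apply (X : C) {Y Z W : C} (h : Y ⟶ Z) (h' : Z ⟶ W) (u : UX X Y) :
    UXmap X (h ≫ h') u = UXmap X h' (UXmap X h u) :=
  LinearMap.congr_fun (UX_ext (φ := UXmap X (h ≫ h')) (ψ := UXmap X h' ∘ₗ UXmap X h)
    fun f => by simp) u

noncomputable def UXprecomp {X Y : C} (f : X ⟶ Y) (Z : C) : UX Y Z →ₗ[ℤ] UX X Z :=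
  Submodule.mapQ (zspan Y Z) (zspan X Z)
    (Finsupp.lmapDomain ℤ ℤ (fun g : Y ⟶ Z => f ≫ g))
    (by
      rw [zspan, Submodule.span_le, Set.singleton_subset_iff]
      simp only [SetLike.mem_coe, Submodule.mem_comap, Finsupp.lmapDomain_apply,
        Finsupp.mapDomain_single, comp_zero]
      exact Submodule.subset_span rfl)

@[simp] lemma UXprecomp_mk_single {X Y : C} (f : X ⟶ Y) {Z : C} (g : Y ⟶ Z) :
    UXprecomp f Z (Submodule.Quotient.mk (Finsupp.single g (1 : ℤ))) =
      Submodule.Quotient.mk (Finsupp.single (f ≫ g) 1) := by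
  simp [UXprecomp, Submodule.mapQ_apply]

lemma UXprecomp_UXmap {X Y : C} (f : X ⟶ Y) {Z W : C} (h : Z ⟶ W) (u : UX Y Z) :
    UXprecomp f W (UXmap Y h u) = UXmap X h (UXprecomp f Z u) :=
  LinearMap.congr_fun (UX_ext (φ := UXprecomp f W ∘ₗ UXmap Y h)
    (ψ := UXmap X h ∘ₗ UXprecomp f Z) fun g => by simp) u

end UX

omit [HasZeroMorphisms C] in
lemma sigmaDesc_id_comp {ι : Type} [Finite ι] {Y Z : C} (g : Y ⟶ Z) :
    (Sigma.desc fun _ : ι => 𝟙 Y) ≫ g =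
      Limits.Sigma.map (fun _ : ι => g) ≫ Sigma.desc fun _ : ι => 𝟙 Z := by
  ext; simp

lemma sigmaMap_comp_rhat {ι : Type} [Fintype ι] [DecidableEq ι] {Y Z : C} (g : Y ⟶ Z)
    (k : ι) :
    Limits.Sigma.map (fun _ : ι => g) ≫ rhat (fun _ : ι => Z) k =
      rhat (fun _ : ι => Y) k ≫ Limits.Sigma.map (fun _ : {i : ι // i ≠ k} => g) := by
  ext i
  by_cases h : i = k <;> simp [rhat, h]

lemma UXmap_mem_TnIm (n : ℕ) {X Y Z : C} (g : Y ⟶ Z) {b : UX X Y}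
    (hb : b ∈ TnIm n X Y) : UXmap X g b ∈ TnIm n X Z := by
  obtain ⟨u, hu, rfl⟩ := hb
  simp only [SetLike.mem_coe, Submodule.mem_iInf, LinearMap.mem_ker] at hu
  refine ⟨UXmap X (Limits.Sigma.map fun _ : Fin (n + 1) => g) u, ?_, ?_⟩
  · simp only [SetLike.mem_coe, Submodule.mem_iInf, LinearMap.mem_ker]
    intro k
    rw [← UXmap_comp_apply, sigmaMap_comp_rhat, UXmap_comp_apply, hu k, map_zero]
  · rw [← UXmap_comp_apply, ← sigmaDesc_id_comp, UXmap_comp_apply]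

lemma UXprecomp_mem_TnIm (n : ℕ) {X Y Z : C} (f : X ⟶ Y) {c : UX Y Z}
    (hc : c ∈ TnIm n Y Z) : UXprecomp f Z c ∈ TnIm n X Z := by
  obtain ⟨u, hu, rfl⟩ := hc
  simp only [SetLike.mem_coe, Submodule.mem_iInf, LinearMap.mem_ker] at hu
  refine ⟨UXprecomp f _ u, ?_, (UXprecomp_UXmap f _ u).symm⟩
  simp only [SetLike.mem_coe, Submodule.mem_iInf, LinearMap.mem_ker]
  intro k
  rw [← UXprecomp_UXmap, hu k, map_zero]

lemma tn_zero (n : ℕ) (X Y : C) : tn n (0 : X ⟶ Y) = 0 := by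
  rw [tn, UX_mk_single_zero]
  rfl

lemma TnU_ext {M : Type*} [AddCommGroup M] {n : ℕ} {X Y : C} {φ ψ : TnU n X Y →ₗ[ℤ] M}
    (h : ∀ f : X ⟶ Y, φ (tn n f) = ψ (tn n f)) : φ = ψ :=
  Submodule.linearMap_qext _ (UX_ext h)

noncomputable def TnUmap (n : ℕ) (X : C) {Y Z : C} (g : Y ⟶ Z) :
    TnU n X Y →ₗ[ℤ] TnU n X Z :=
  Submodule.mapQ (TnIm n X Y) (TnIm n X Z) (UXmap X g) fun _ hb => UXmap_mem_TnIm n g hb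

@[simp] lemma TnUmap_tn (n : ℕ) (X : C) {Y Z : C} (g : Y ⟶ Z) (f : X ⟶ Y) :
    TnUmap n X g (tn n f) = tn n (f ≫ g) := by
  simp [TnUmap, tn, Submodule.mapQ_apply]

noncomputable def UXcompTnU (n : ℕ) (X : C) {Y Z : C} :
    UX Y Z →ₗ[ℤ] TnU n X Y →ₗ[ℤ] TnU n X Z :=
  Submodule.liftQ (zspan Y Z) (Finsupp.linearCombination ℤ fun g => TnUmap n X g)
    (by
      rw [zspan, Submodule.span_le, Set.singleton_subset_iff, SetLike.mem_coe,
        LinearMap.mem_ker, Finsupp.linearCombination_single, one_smul]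
      exact TnU_ext fun f => by simp [tn_zero])

@[simp] lemma UXcompTnU_mk_single (n : ℕ) (X : C) {Y Z : C} (g : Y ⟶ Z) :
    UXcompTnU n X (Submodule.Quotient.mk (Finsupp.single g (1 : ℤ))) = TnUmap n X g := by
  simp [UXcompTnU]

lemma UXcompTnU_apply_tn (n : ℕ) (X : C) {Y Z : C} (f : X ⟶ Y) (c : UX Y Z) :
    UXcompTnU n X c (tn n f) = Submodule.Quotient.mk (UXprecomp f Z c) :=
  LinearMap.congr_fun (UX_ext (φ := LinearMap.applyₗ (tn n f) ∘ₗ UXcompTnU n X)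
    (ψ := (TnIm n X Z).mkQ ∘ₗ UXprecomp f Z) fun g => by simp; rfl) c

noncomputable def TnUcomp (n : ℕ) (X : C) {Y Z : C} :
    TnU n Y Z →ₗ[ℤ] TnU n X Y →ₗ[ℤ] TnU n X Z :=
  Submodule.liftQ (TnIm n Y Z) (UXcompTnU n X) fun c hc =>
    TnU_ext fun f => by
      rw [UXcompTnU_apply_tn, LinearMap.zero_apply, Submodule.Quotient.mk_eq_zero]
      exact UXprecomp_mem_TnIm n f hc

@[simp] lemma TnUcomp_tn_tn (n : ℕ) {X Y Z : C} (f : X ⟶ Y) (g : Y ⟶ Z) :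
    TnUcomp n X (tn n g) (tn n f) = tn n (f ≫ g) := by
  change UXcompTnU n X (Submodule.Quotient.mk (Finsupp.single g 1)) (tn n f) = _
  rw [UXcompTnU_mk_single, TnUmap_tn]

lemma TnUcomp_apply_tn_id (n : ℕ) {X Y : C} (a : TnU n X Y) :
    TnUcomp n X a (tn n (𝟙 X)) = a :=
  LinearMap.congr_fun (TnU_ext (φ := (TnUcomp n X).flip (tn n (𝟙 X))) (ψ := LinearMap.id)
    fun g => by simp) a

lemma TnUcomp_tn_id_apply (n : ℕ) {X Y : C} (a : TnU n X Y) :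
    TnUcomp n X (tn n (𝟙 Y)) a = a :=
  LinearMap.congr_fun (TnU_ext (φ := TnUcomp n X (tn n (𝟙 Y))) (ψ := LinearMap.id)
    fun f => by simp) a

lemma TnUcomp_assoc (n : ℕ) {W X Y Z : C} (a : TnU n W X) (b : TnU n X Y) (c : TnU n Y Z) :
    TnUcomp n W (TnUcomp n X c b) a = TnUcomp n W c (TnUcomp n W b a) := by
  suffices h : ∀ f : W ⟶ X, TnUcomp n W (TnUcomp n X c b) (tn n f) =
      TnUcomp n W c (TnUcomp n W b (tn n f)) from
    LinearMap.congr_fun (TnU_ext (φ := TnUcomp n W (TnUcomp n X c b))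
      (ψ := TnUcomp n W c ∘ₗ TnUcomp n W b) h) a
  intro f
  suffices h : ∀ g : X ⟶ Y, TnUcomp n W (TnUcomp n X c (tn n g)) (tn n f) =
      TnUcomp n W c (tn n (f ≫ g)) by
    simpa using LinearMap.congr_fun (TnU_ext
      (φ := (TnUcomp n W).flip (tn n f) ∘ₗ TnUcomp n X c)
      (ψ := TnUcomp n W c ∘ₗ (TnUcomp n W).flip (tn n f)) (by simpa using h)) b
  intro g
  simpa using LinearMap.congr_fun (TnU_ext
    (φ := (TnUcomp n W).flip (tn n f) ∘ₗ (TnUcomp n X).flip (tn n g))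
    (ψ := (TnUcomp n W).flip (tn n (f ≫ g))) fun h => by simp) c

theorem taylorized_category_exists_general (n : ℕ) :
    ∃ comp : ∀ X Y Z : C, TnU n Y Z →+ TnU n X Y →+ TnU n X Z,
      (∀ (X Y Z : C) (f : X ⟶ Y) (g : Y ⟶ Z),
        comp X Y Z (tn n g) (tn n f) = tn n (f ≫ g)) ∧
      (∀ (X Y : C) (a : TnU n X Y), comp X X Y a (tn n (𝟙 X)) = a) ∧
      (∀ (X Y : C) (a : TnU n X Y), comp X Y Y (tn n (𝟙 Y)) a = a) ∧
      (∀ (W X Y Z : C) (a : TnU n W X) (b : TnU n X Y) (c : TnU n Y Z),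
        comp W X Z (comp X Y Z c b) a = comp W Y Z c (comp W X Y b a)) :=
  ⟨fun X _ _ => LinearMap.toAddMonoidHom'.comp (TnUcomp n X).toAddMonoidHom,
    fun _ _ _ => TnUcomp_tn_tn n, fun _ _ => TnUcomp_apply_tn_id n,
    fun _ _ => TnUcomp_tn_id_apply n, fun _ _ _ _ => TnUcomp_assoc n⟩

/-- Let `C` be a pointed category with finite sums and
`n ≥ 1`.  There is a well-defined preadditive category `T_n ℤ̄[C]` with the same
objects as `C`, with morphism groups `Hom(X,Y) = T_n U_X^C (Y)`, and with a
(bi)additive composition satisfying `t_n(g) ∘ t_n(f) = t_n(g ∘ f)` — in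
particular the composition is associative and the elements `t_n(𝟙)` are
identities. -/
theorem taylorized_category_exists (n : ℕ) (hn : 1 ≤ n) :
    ∃ comp : ∀ X Y Z : C, TnU n Y Z →+ TnU n X Y →+ TnU n X Z,
      (∀ (X Y Z : C) (f : X ⟶ Y) (g : Y ⟶ Z),
        comp X Y Z (tn n g) (tn n f) = tn n (f ≫ g)) ∧
      (∀ (X Y : C) (a : TnU n X Y), comp X X Y a (tn n (𝟙 X)) = a) ∧
      (∀ (X Y : C) (a : TnU n X Y), comp X Y Y (tn n (𝟙 Y)) a = a) ∧
      (∀ (W X Y Z : C) (a : TnU n W X) (b : TnU n X Y) (c : TnU n Y Z),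
        comp W X Z (comp X Y Z c b) a = comp W Y Z c (comp W X Y b a)) :=
  taylorized_category_exists_general n
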